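/- Let G = (V,E) be a finite simple graph and let u, v ∈ V be two adjacent vertices. If the clique number of the subgraph induced on N(u) is strictly less than the clique number of the subgraph induced on N(v), then the clique number of the subgraph induced on N(v) ∖ {u} equals the clique number of the subgraph induced on N(v). -/

import Mathlib

/-!
A maximum clique `K` of `G[N(v)]` either avoids `u`, and then already lies in `N(v) ∖ {u}`, or
contains `u`; in the latter case `(K ∖ {u}) ∪ {v}` is a clique of the same size inside `N(u)`,
contradicting `ω(G[N(u)]) < ω(G[N(v)])`.
-/

open SimpleGraph

/-- `theta G k` is the minimum, over all vertex subsets `S` with `|S| ≤ k`, of the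
clique number of the subgraph of `G` induced on the complement of `S`. -/
noncomputable def theta {V : Type*} (G : SimpleGraph V) (k : ℕ) : ℕ :=
  sInf {m | ∃ S : Finset V, S.card ≤ k ∧ (G.induce ((↑S : Set V)ᶜ)).cliqueNum = m}

namespace SimpleGraph

open Finset

variable {α : Type*} {G : SimpleGraph α}

theorem IsClique.card_le_cliqueNum_induce [Finite α] {s : Set α} {t : Finset α}
    (ht : G.IsClique (t : Set α)) (hts : (t : Set α) ⊆ s) :
    #t ≤ (G.induce s).cliqueNum := by
  classical
  have hmap : (t.subtype (· ∈ s)).map (Function.Embedding.subtype _) = t := by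
    rw [Finset.subtype_map, Finset.filter_true_of_mem fun x hx => hts hx]
  have hclique : (G.induce s).IsNClique #t (t.subtype (· ∈ s)) := by
    rw [isNClique_induce_iff, hmap]
    exact ⟨ht, rfl⟩
  exact hclique.card_eq ▸ hclique.isClique.card_le_cliqueNum

theorem exists_isNClique_cliqueNum_induce (s : Set α) :
    ∃ t : Finset α, (t : Set α) ⊆ s ∧ G.IsNClique (G.induce s).cliqueNum t := by
  obtain ⟨t, ht⟩ := (G.induce s).exists_isNClique_cliqueNum
  refine ⟨t.map (Function.Embedding.subtype _), ?_, (isNClique_induce_iff s t _).mp ht⟩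
  simp

theorem cliqueNum_induce_mono [Finite α] {s t : Set α} (hst : s ⊆ t) :
    (G.induce s).cliqueNum ≤ (G.induce t).cliqueNum := by
  obtain ⟨K, hKs, hK⟩ := G.exists_isNClique_cliqueNum_induce s
  exact hK.card_eq ▸ hK.isClique.card_le_cliqueNum_induce (hKs.trans hst)

theorem card_le_cliqueNum_induce_neighborSet_of_mem [Finite α] [DecidableEq α]
    {u v : α} {K : Finset α} (hK : G.IsClique (K : Set α)) (hKv : (K : Set α) ⊆ G.neighborSet v)
    (hu : u ∈ K) : #K ≤ (G.induce (G.neighborSet u)).cliqueNum := by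
  have hvK : v ∉ K := fun hv => G.loopless.irrefl v (hKv hv)
  have hclique : G.IsClique (insert v (K.erase u) : Finset α) := by
    rw [coe_insert, coe_erase]
    exact (hK.subset Set.sdiff_subset).insert fun b hb _ => hKv hb.1
  have hsub : ((insert v (K.erase u) : Finset α) : Set α) ⊆ G.neighborSet u := by
    rw [coe_insert, coe_erase]
    rintro x (rfl | ⟨hx, hxu⟩)
    · exact (hKv hu).symm
    · exact hK hu hx (Ne.symm hxu)
  calc #K = #(insert v (K.erase u)) := by
        rw [card_insert_of_notMem fun hv => hvK (mem_of_mem_erase hv), card_erase_add_one hu]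
    _ ≤ _ := hclique.card_le_cliqueNum_induce hsub

end SimpleGraph

theorem clique_neighbor_lemma_general {V : Type*} [Fintype V] (G : SimpleGraph V) (u v : V)
    (h : (G.induce (G.neighborSet u)).cliqueNum < (G.induce (G.neighborSet v)).cliqueNum) :
    (G.induce (G.neighborSet v \ {u})).cliqueNum = (G.induce (G.neighborSet v)).cliqueNum := by
  classical
  refine le_antisymm (cliqueNum_induce_mono Set.sdiff_subset) ?_
  obtain ⟨K, hKv, hK⟩ := G.exists_isNClique_cliqueNum_induce (G.neighborSet v)
  by_cases hu : u ∈ K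
  · have := hK.card_eq ▸ card_le_cliqueNum_induce_neighborSet_of_mem hK.isClique hKv hu
    omega
  · exact hK.card_eq ▸ hK.isClique.card_le_cliqueNum_induce
      fun x hx => ⟨hKv hx, fun hxu : x = u => hu (hxu ▸ hx)⟩

theorem clique_neighbor_lemma {V : Type*} [Fintype V] (G : SimpleGraph V) (u v : V)
    (hadj : G.Adj u v)
    (h : (G.induce (G.neighborSet u)).cliqueNum < (G.induce (G.neighborSet v)).cliqueNum) :
    (G.induce (G.neighborSet v \ {u})).cliqueNum = (G.induce (G.neighborSet v)).cliqueNum :=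
  clique_neighbor_lemma_general G u v h
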